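/- arXiv:2412.12850 — 3 statements merged into one kernel-verified Lean document; each statement's English description precedes it below -/
import Mathlib

section
/- Let P⁺, P_g, P⁻ be probability measures on X, γ ∈ (0,1], a > 0, and P'_m = γ P_g + (1−γ) P⁻. For D: X → [0,a] measurable, the loss L_D(D) = E_{P⁺}[D] + γ E_{P_g}[a − D] + (1−γ) E_{P⁻}[a − D] equals a + E_{P⁺}[D] − E_{P'_m}[D], and its infimum over all measurable D: X → [0,a] equals a − (a/2)·‖P⁺ − P'_m‖_TV. -/
open MeasureTheory Set

/-- Total variation norm of a signed measure: `‖μ‖_TV = |μ|(X)`. -/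
noncomputable def tv {X : Type*} [MeasurableSpace X] (μ : SignedMeasure X) : ℝ :=
  (μ.totalVariation Set.univ).toReal

/-!
Write the Jordan decomposition of `P⁺ - P'_m` as `p - n` with `p ⟂ n`. Both measures have mass
one, so `p X = n X` and `‖P⁺ - P'_m‖_TV = 2 n X`. For `0 ≤ D ≤ a` the loss is
`a + ∫ D dp - ∫ D dn ≥ a - a n X`, with equality for `D = a 𝟙_B`, where `B` is a `p`-null set
carrying `n`.
-/

section

variable {X : Type*} [MeasurableSpace X]

lemma integrable_of_forall_mem_Icc (μ : Measure X) [IsFiniteMeasure μ] {D : X → ℝ} {a : ℝ}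
    (hD : Measurable D) (hDa : ∀ x, D x ∈ Icc 0 a) : Integrable D μ :=
  .of_bound hD.aestronglyMeasurable a <| .of_forall fun x => by
    rw [Real.norm_eq_abs, abs_of_nonneg (hDa x).1]; exact (hDa x).2

lemma integral_const_sub_of_isProbabilityMeasure (μ : Measure X) [IsProbabilityMeasure μ]
    {f : X → ℝ} (hf : Integrable f μ) (a : ℝ) : ∫ x, (a - f x) ∂μ = a - ∫ x, f x ∂μ := by
  rw [integral_sub (integrable_const a) hf, integral_const, probReal_univ, one_smul]

/-- `toNNReal` truncates, so this is `γ μ + (1 - γ) ν` only for `γ ∈ [0, 1]`. -/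
noncomputable def mixture (γ : ℝ) (μ ν : Measure X) : Measure X :=
  γ.toNNReal • μ + (1 - γ).toNNReal • ν

section Mixture

variable {γ : ℝ} (μ ν : Measure X)

instance [IsFiniteMeasure μ] [IsFiniteMeasure ν] : IsFiniteMeasure (mixture γ μ ν) := by
  unfold mixture; infer_instance

lemma mixture_apply_univ (hγ : γ ∈ Icc (0 : ℝ) 1) [IsProbabilityMeasure μ]
    [IsProbabilityMeasure ν] : mixture γ μ ν univ = 1 := by
  rw [mixture, Measure.add_apply, Measure.smul_apply, Measure.smul_apply, measure_univ,
    measure_univ, ENNReal.smul_def, ENNReal.smul_def, smul_eq_mul, smul_eq_mul, mul_one, mul_one,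
    ← ENNReal.coe_add, ← Real.toNNReal_add hγ.1 (sub_nonneg.2 hγ.2)]
  norm_num

lemma toSignedMeasure_mixture (hγ : γ ∈ Icc (0 : ℝ) 1) [IsFiniteMeasure μ] [IsFiniteMeasure ν] :
    (mixture γ μ ν).toSignedMeasure = γ • μ.toSignedMeasure + (1 - γ) • ν.toSignedMeasure := by
  rw [Measure.toSignedMeasure_congr (mixture.eq_1 γ μ ν), Measure.toSignedMeasure_add,
    Measure.toSignedMeasure_smul, Measure.toSignedMeasure_smul, NNReal.smul_def, NNReal.smul_def,
    Real.coe_toNNReal _ hγ.1, Real.coe_toNNReal _ (sub_nonneg.2 hγ.2)]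

lemma integral_mixture (hγ : γ ∈ Icc (0 : ℝ) 1) {f : X → ℝ} (hfμ : Integrable f μ)
    (hfν : Integrable f ν) :
    ∫ x, f x ∂(mixture γ μ ν) = γ * ∫ x, f x ∂μ + (1 - γ) * ∫ x, f x ∂ν := by
  rw [mixture, integral_add_measure hfμ.smul_measure_nnreal hfν.smul_measure_nnreal,
    integral_smul_nnreal_measure, integral_smul_nnreal_measure, NNReal.smul_def, NNReal.smul_def,
    Real.coe_toNNReal _ hγ.1, Real.coe_toNNReal _ (sub_nonneg.2 hγ.2), smul_eq_mul, smul_eq_mul]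

end Mixture

section JordanDecomposition

variable (μ ν : Measure X) [IsFiniteMeasure μ] [IsFiniteMeasure ν]

lemma add_negPart_eq_add_posPart :
    μ + (μ.toSignedMeasure - ν.toSignedMeasure).toJordanDecomposition.negPart
      = ν + (μ.toSignedMeasure - ν.toSignedMeasure).toJordanDecomposition.posPart := by
  have hjordan := (μ.toSignedMeasure - ν.toSignedMeasure).toSignedMeasure_toJordanDecomposition
  rw [JordanDecomposition.toSignedMeasure, sub_eq_sub_iff_add_eq_add] at hjordan
  rw [← Measure.toSignedMeasure_eq_toSignedMeasure_iff, Measure.toSignedMeasure_add,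
    Measure.toSignedMeasure_add, add_comm ν.toSignedMeasure]
  exact hjordan.symm

lemma posPart_univ_eq_negPart_univ (hμν : μ univ = ν univ) :
    (μ.toSignedMeasure - ν.toSignedMeasure).toJordanDecomposition.posPart univ
      = (μ.toSignedMeasure - ν.toSignedMeasure).toJordanDecomposition.negPart univ := by
  have h := congrArg (· univ) (add_negPart_eq_add_posPart μ ν)
  simp only [Measure.add_apply, hμν] at h
  exact ((ENNReal.add_right_inj (measure_ne_top ν univ)).1 h).symm

lemma tv_sub_eq_two_mul_negPart (hμν : μ univ = ν univ) :
    tv (μ.toSignedMeasure - ν.toSignedMeasure)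
      = 2 * ((μ.toSignedMeasure - ν.toSignedMeasure).toJordanDecomposition.negPart univ).toReal := by
  rw [tv, SignedMeasure.totalVariation, Measure.add_apply, posPart_univ_eq_negPart_univ μ ν hμν,
    ENNReal.toReal_add (measure_ne_top _ _) (measure_ne_top _ _)]
  ring

lemma integral_sub_integral_eq_posPart_sub_negPart {D : X → ℝ} {a : ℝ} (hD : Measurable D)
    (hDa : ∀ x, D x ∈ Icc 0 a) :
    ∫ x, D x ∂μ - ∫ x, D x ∂ν
      = ∫ x, D x ∂(μ.toSignedMeasure - ν.toSignedMeasure).toJordanDecomposition.posPart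
        - ∫ x, D x ∂(μ.toSignedMeasure - ν.toSignedMeasure).toJordanDecomposition.negPart := by
  have h := congrArg (fun ρ => ∫ x, D x ∂ρ) (add_negPart_eq_add_posPart μ ν)
  rw [integral_add_measure (integrable_of_forall_mem_Icc _ hD hDa)
      (integrable_of_forall_mem_Icc _ hD hDa),
    integral_add_measure (integrable_of_forall_mem_Icc _ hD hDa)
      (integrable_of_forall_mem_Icc _ hD hDa)] at h
  linarith

lemma neg_half_mul_tv_le_integral_sub_integral (hμν : μ univ = ν univ) {D : X → ℝ} {a : ℝ}
    (hD : Measurable D) (hDa : ∀ x, D x ∈ Icc 0 a) :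
    -(a / 2 * tv (μ.toSignedMeasure - ν.toSignedMeasure)) ≤ ∫ x, D x ∂μ - ∫ x, D x ∂ν := by
  set j := (μ.toSignedMeasure - ν.toSignedMeasure).toJordanDecomposition
  have hpos : 0 ≤ ∫ x, D x ∂j.posPart := integral_nonneg fun x => (hDa x).1
  have hneg : ∫ x, D x ∂j.negPart ≤ ∫ _, a ∂j.negPart :=
    integral_mono (integrable_of_forall_mem_Icc _ hD hDa) (integrable_const a) fun x => (hDa x).2
  rw [integral_const, smul_eq_mul, measureReal_def] at hneg
  rw [integral_sub_integral_eq_posPart_sub_negPart μ ν hD hDa, tv_sub_eq_two_mul_negPart μ ν hμν]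
  linarith

lemma exists_integral_sub_integral_eq_neg_half_mul_tv (hμν : μ univ = ν univ) {a : ℝ}
    (ha : 0 ≤ a) : ∃ D : X → ℝ, Measurable D ∧ (∀ x, D x ∈ Icc 0 a) ∧
      ∫ x, D x ∂μ - ∫ x, D x ∂ν = -(a / 2 * tv (μ.toSignedMeasure - ν.toSignedMeasure)) := by
  set j := (μ.toSignedMeasure - ν.toSignedMeasure).toJordanDecomposition
  obtain ⟨B, hB, hposB, hnegBc⟩ := j.mutuallySingular
  have hDa : ∀ x, B.indicator (fun _ => a) x ∈ Icc 0 a := fun x => by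
    by_cases hx : x ∈ B <;> simp [hx, ha]
  have hnegB : j.negPart B = j.negPart univ := by
    rw [← measure_add_measure_compl hB, hnegBc, add_zero]
  refine ⟨B.indicator fun _ => a, measurable_const.indicator hB, hDa, ?_⟩
  rw [integral_sub_integral_eq_posPart_sub_negPart μ ν (measurable_const.indicator hB) hDa,
    integral_indicator_const a hB, integral_indicator_const a hB, measureReal_def,
    measureReal_def, hposB, hnegB, tv_sub_eq_two_mul_negPart μ ν hμν, ENNReal.toReal_zero,
    smul_eq_mul, smul_eq_mul]
  ring

end JordanDecomposition

end

/-- For `D : X → [0,a]`, `L_D(D) = a + E_{P⁺}[D] - E_{P'_m}[D]` where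
`P'_m = γP_g + (1-γ)P⁻`, and `inf_D L_D(D) = a - (a/2)‖P⁺ - P'_m‖_TV`. -/
theorem stmt3 {X : Type*} [MeasurableSpace X] (Pp Pg Pn : Measure X)
    [IsProbabilityMeasure Pp] [IsProbabilityMeasure Pg] [IsProbabilityMeasure Pn]
    (a γ : ℝ) (ha : 0 < a) (hγ : γ ∈ Set.Ioc (0 : ℝ) 1) :
    (∀ D : X → ℝ, Measurable D → (∀ x, D x ∈ Set.Icc 0 a) →
      (∫ x, D x ∂Pp) + γ * (∫ x, (a - D x) ∂Pg) + (1 - γ) * (∫ x, (a - D x) ∂Pn)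
        = a + (∫ x, D x ∂Pp) - (γ * (∫ x, D x ∂Pg) + (1 - γ) * (∫ x, D x ∂Pn))) ∧
    IsGLB {v : ℝ | ∃ D : X → ℝ, Measurable D ∧ (∀ x, D x ∈ Set.Icc 0 a) ∧
        v = (∫ x, D x ∂Pp) + γ * (∫ x, (a - D x) ∂Pg) + (1 - γ) * (∫ x, (a - D x) ∂Pn)}
      (a - (a / 2) * tv (Pp.toSignedMeasure
          - (γ • Pg.toSignedMeasure + (1 - γ) • Pn.toSignedMeasure))) := by
  have hγ' : γ ∈ Icc (0 : ℝ) 1 := Ioc_subset_Icc_self hγ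
  have hloss : ∀ D : X → ℝ, Measurable D → (∀ x, D x ∈ Icc 0 a) →
      (∫ x, D x ∂Pp) + γ * (∫ x, (a - D x) ∂Pg) + (1 - γ) * (∫ x, (a - D x) ∂Pn)
        = a + (∫ x, D x ∂Pp) - (γ * (∫ x, D x ∂Pg) + (1 - γ) * (∫ x, D x ∂Pn)) := by
    intro D hD hDa
    rw [integral_const_sub_of_isProbabilityMeasure Pg (integrable_of_forall_mem_Icc _ hD hDa),
      integral_const_sub_of_isProbabilityMeasure Pn (integrable_of_forall_mem_Icc _ hD hDa)]
    ring
  have hloss_mixture : ∀ D : X → ℝ, Measurable D → (∀ x, D x ∈ Icc 0 a) →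
      (∫ x, D x ∂Pp) + γ * (∫ x, (a - D x) ∂Pg) + (1 - γ) * (∫ x, (a - D x) ∂Pn)
        = a + ((∫ x, D x ∂Pp) - ∫ x, D x ∂(mixture γ Pg Pn)) := fun D hD hDa => by
    rw [hloss D hD hDa, integral_mixture Pg Pn hγ' (integrable_of_forall_mem_Icc _ hD hDa)
      (integrable_of_forall_mem_Icc _ hD hDa)]
    ring
  have hmass : Pp univ = mixture γ Pg Pn univ := by rw [measure_univ, mixture_apply_univ _ _ hγ']
  rw [← toSignedMeasure_mixture Pg Pn hγ']
  refine ⟨hloss, IsLeast.isGLB ⟨?_, ?_⟩⟩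
  · obtain ⟨D, hD, hDa, hmin⟩ :=
      exists_integral_sub_integral_eq_neg_half_mul_tv Pp (mixture γ Pg Pn) hmass ha.le
    exact ⟨D, hD, hDa, by rw [hloss_mixture D hD hDa, hmin]; ring⟩
  · rintro v ⟨D, hD, hDa, rfl⟩
    rw [hloss_mixture D hD hDa]
    linarith [neg_half_mul_tv_le_integral_sub_integral Pp (mixture γ Pg Pn) hmass hD hDa]
end

section
/- Let P⁺ and P⁻ be mutually singular probability measures, β ∈ (0,1), γ ∈ (0,1], P_m = β P⁺ + (1−β) P⁻, and η = γ/(1−β+βγ). For any probability measure P_g, define the generator value L_G(P_g) = (γa/(2η))·(1/2)‖P⁺ − η P_g − (1−η) P⁻‖_TV for a > 0. Then L_G(P_g) ≥ γa(1−η)/(2η), with equality when P_g = P⁺. -/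
open MeasureTheory Set

/-! On the set `S` carrying `P⁺` and missing `P⁻`, the signed measure
`P⁺ - ηP_g - (1-η)P⁻` has mass at least `1 - η` and its complement mass at most `-(1 - η)`, so its
total variation is at least `2(1 - η)`. For `P_g = P⁺` it equals `(1 - η)(P⁺ - P⁻)`, whose total
variation is exactly `2(1 - η)` by mutual singularity. Since `0 < η ≤ 1`, scaling by the positive
constant `γa/(2η)` gives both claims. -/

section
variable {X : Type*} [MeasurableSpace X]

lemma tv_eq_variation_real (s : SignedMeasure X) : tv s = s.variation.real univ := by
  rw [tv, s.totalVariation_eq_variation, measureReal_def]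

lemma abs_apply_add_abs_apply_compl_le_tv (s : SignedMeasure X) {S : Set X}
    (hS : MeasurableSet S) : |s S| + |s Sᶜ| ≤ tv s := by
  have hS₁ := s.norm_le_totalVariation S
  have hS₂ := s.norm_le_totalVariation Sᶜ
  rw [tv, ← measureReal_def, ← measureReal_add_measureReal_compl hS]
  exact add_le_add hS₁ hS₂

lemma tv_sub_le (s t : SignedMeasure X) : tv (s - t) ≤ tv s + tv t := by
  have h := VectorMeasure.variation_sub_le (μ := s) (ν := t) univ
  simp only [← SignedMeasure.totalVariation_eq_variation, Measure.add_apply] at h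
  rw [tv, tv, tv, ← ENNReal.toReal_add (by finiteness) (by finiteness)]
  exact ENNReal.toReal_mono (by finiteness) h

lemma tv_smul (r : ℝ) (s : SignedMeasure X) : tv (r • s) = |r| * tv s := by
  simp [tv_eq_variation_real, VectorMeasure.variation_smul]

lemma tv_toSignedMeasure (μ : Measure X) [IsFiniteMeasure μ] :
    tv μ.toSignedMeasure = μ.real univ := by
  rw [tv_eq_variation_real, Measure.variation_toSignedMeasure]

lemma tv_toSignedMeasure_sub_of_mutuallySingular {μ ν : Measure X} [IsFiniteMeasure μ]
    [IsFiniteMeasure ν] (h : μ ⟂ₘ ν) :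
    tv (μ.toSignedMeasure - ν.toSignedMeasure) = μ.real univ + ν.real univ := by
  refine le_antisymm ((tv_sub_le _ _).trans_eq (by rw [tv_toSignedMeasure, tv_toSignedMeasure])) ?_
  have hN := h.measurableSet_nullSet
  have key := abs_apply_add_abs_apply_compl_le_tv (μ.toSignedMeasure - ν.toSignedMeasure) hN
  rw [← measureReal_add_measureReal_compl (μ := μ) hN,
    ← measureReal_add_measureReal_compl (μ := ν) hN]
  simpa [hN, hN.compl, Measure.toSignedMeasure_apply_measurable, measureReal_def,
    h.measure_nullSet, h.measure_compl_nullSet, add_comm] using key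
end

lemma div_one_sub_add_mul_mem_Ioc {β γ : ℝ} (hβ : β ∈ Ioo (0 : ℝ) 1) (hγ : γ ∈ Ioc (0 : ℝ) 1) :
    γ / (1 - β + β * γ) ∈ Ioc (0 : ℝ) 1 := by
  obtain ⟨hβ₀, hβ₁⟩ := hβ
  obtain ⟨hγ₀, hγ₁⟩ := hγ
  have hd : 0 < 1 - β + β * γ := by nlinarith
  exact ⟨by positivity, (div_le_one hd).2 (by nlinarith)⟩

section
variable {X : Type*} [MeasurableSpace X] {μ ν : Measure X} [IsProbabilityMeasure μ]
  [IsProbabilityMeasure ν]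

lemma two_mul_one_sub_le_tv_sub_smul_sub_smul (ρ : Measure X) [IsProbabilityMeasure ρ]
    {S : Set X} (hS : MeasurableSet S) (hμ : μ S = 1) (hν : ν S = 0) {t : ℝ} (ht : 0 ≤ t) :
    2 * (1 - t) ≤ tv (μ.toSignedMeasure - t • ρ.toSignedMeasure - (1 - t) • ν.toSignedMeasure) := by
  have key := abs_apply_add_abs_apply_compl_le_tv
    (μ.toSignedMeasure - t • ρ.toSignedMeasure - (1 - t) • ν.toSignedMeasure) hS
  have hμ' : μ.real S = 1 := by simp [measureReal_def, hμ]
  have hν' : ν.real S = 0 := by simp [measureReal_def, hν]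
  have hμc : μ.real Sᶜ = 0 := by simp [measureReal_def, (prob_compl_eq_zero_iff hS).2 hμ]
  have hνc : ν.real Sᶜ = 1 := by simp [measureReal_def, (prob_compl_eq_one_iff hS).2 hν]
  have hρ : ρ.real S + ρ.real Sᶜ = 1 := by
    rw [measureReal_add_measureReal_compl hS, probReal_univ]
  simp only [sub_apply, smul_apply, smul_eq_mul, Measure.toSignedMeasure_apply_measurable hS,
    Measure.toSignedMeasure_apply_measurable hS.compl, hμ', hν', hμc, hνc] at key
  have h₁ := le_abs_self (1 - t * ρ.real S - (1 - t) * 0)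
  have h₂ := neg_le_abs (0 - t * ρ.real Sᶜ - (1 - t) * 1)
  nlinarith [mul_nonneg ht (measureReal_nonneg : 0 ≤ ρ.real Sᶜ)]

lemma tv_sub_smul_sub_smul_of_mutuallySingular (h : μ ⟂ₘ ν) {t : ℝ} (ht : t ≤ 1) :
    tv (μ.toSignedMeasure - t • μ.toSignedMeasure - (1 - t) • ν.toSignedMeasure) = 2 * (1 - t) := by
  have hmix : μ.toSignedMeasure - t • μ.toSignedMeasure - (1 - t) • ν.toSignedMeasure =
      (1 - t) • (μ.toSignedMeasure - ν.toSignedMeasure) := by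
    rw [smul_sub, sub_smul, one_smul]
  rw [hmix, tv_smul, tv_toSignedMeasure_sub_of_mutuallySingular h, abs_of_nonneg (by linarith)]
  simp only [probReal_univ]
  ring
end

/-- For mutually singular `P⁺, P⁻`, `η = γ/(1-β+βγ)` and
`L_G(P_g) = (γa/(2η))·(1/2)‖P⁺ - ηP_g - (1-η)P⁻‖_TV`:
`L_G(P_g) ≥ γa(1-η)/(2η)` with equality when `P_g = P⁺`. -/
theorem stmt10 {X : Type*} [MeasurableSpace X] (Pp Pn Pg : Measure X)
    [IsProbabilityMeasure Pp] [IsProbabilityMeasure Pn] [IsProbabilityMeasure Pg]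
    (S : Set X) (hS : MeasurableSet S) (hSp : Pp S = 1) (hSn : Pn S = 0)
    (a β γ η : ℝ) (ha : 0 < a) (hβ : β ∈ Set.Ioo (0 : ℝ) 1) (hγ : γ ∈ Set.Ioc (0 : ℝ) 1)
    (hη : η = γ / (1 - β + β * γ)) :
    (γ * a / (2 * η)) * ((1 / 2) * tv (Pp.toSignedMeasure - η • Pg.toSignedMeasure
        - (1 - η) • Pn.toSignedMeasure)) ≥ γ * a * (1 - η) / (2 * η) ∧
    (γ * a / (2 * η)) * ((1 / 2) * tv (Pp.toSignedMeasure - η • Pp.toSignedMeasure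
        - (1 - η) • Pn.toSignedMeasure)) = γ * a * (1 - η) / (2 * η) := by
  obtain ⟨hη₀, hη₁⟩ : η ∈ Ioc (0 : ℝ) 1 := hη ▸ div_one_sub_add_mul_mem_Ioc hβ hγ
  have hsep : Pp ⟂ₘ Pn := ⟨Sᶜ, hS.compl, (prob_compl_eq_zero_iff hS).2 hSp, by rwa [compl_compl]⟩
  have hc : 0 ≤ γ * a / (2 * η) := by have := hγ.1; positivity
  constructor
  · have hlow := two_mul_one_sub_le_tv_sub_smul_sub_smul Pg hS hSp hSn hη₀.le
    calc γ * a * (1 - η) / (2 * η) = γ * a / (2 * η) * ((1 / 2) * (2 * (1 - η))) := by ring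
      _ ≤ _ := by gcongr
  · rw [tv_sub_smul_sub_smul_of_mutuallySingular hsep hη₁]
    ring
end

section
/- Let P⁺, P⁻ be mutually singular probability measures, γ ∈ (0,1], a > 0. Consider the two-player game where the discriminator minimizes L_D(D, P_g) = E_{P⁺}[D] + γE_{P_g}[max(0, a−D)] + (1−γ)E_{P⁻}[max(0, a−D)] over measurable D: X → [0,∞), and the generator minimizes L_G(D, P_g) = γE_{P_g}[D] + (1−γ)E_{P⁻}[D] − E_{P⁺}[D] over probability measures P_g. Then at P_g* = P⁺, the optimal discriminator value is L_D(D*, P⁺) = a − (a/2)·2(1−γ) = aγ, and the generator value L_G(D*, P⁺) = a(1−γ)/2 achieves the infimum of P_g ↦ L_G(D*(P_g), P_g) where D*(P_g) is the optimal discriminator against P_g; i.e., the pair (D*, P⁺) is a Nash equilibrium. -/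
open MeasureTheory Set

/-- Discriminator loss `L_D(D, P_g)` of the image-level game. -/
noncomputable def LD {X : Type*} [MeasurableSpace X] (Pp Pn : Measure X) (a γ : ℝ)
    (D : X → ℝ) (Pg : Measure X) : ℝ :=
  (∫ x, D x ∂Pp) + γ * (∫ x, max 0 (a - D x) ∂Pg)
    + (1 - γ) * (∫ x, max 0 (a - D x) ∂Pn)

section

variable {X : Type*} [MeasurableSpace X]

def LDValues (Pp Pn : Measure X) (a γ : ℝ) (Pg : Measure X) : Set ℝ :=
  {v | ∃ D : X → ℝ, Measurable D ∧ (∀ x, D x ∈ Icc 0 a) ∧ v = LD Pp Pn a γ D Pg}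

lemma integrable_of_mem_Icc (μ : Measure X) [IsFiniteMeasure μ] {D : X → ℝ} (hD : Measurable D)
    {a : ℝ} (hDa : ∀ x, D x ∈ Icc 0 a) : Integrable D μ :=
  .of_bound hD.aestronglyMeasurable a <| .of_forall fun x => by
    rw [Real.norm_eq_abs, abs_of_nonneg (hDa x).1]
    exact (hDa x).2

lemma LD_nonneg (Pp Pn Pg : Measure X) {a γ : ℝ} (hγ : γ ∈ Icc (0 : ℝ) 1) {D : X → ℝ}
    (hD : ∀ x, 0 ≤ D x) : 0 ≤ LD Pp Pn a γ D Pg := by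
  have hPp : 0 ≤ ∫ x, D x ∂Pp := integral_nonneg hD
  have hPg : 0 ≤ ∫ x, max 0 (a - D x) ∂Pg := integral_nonneg fun _ => le_max_left _ _
  have hPn : 0 ≤ ∫ x, max 0 (a - D x) ∂Pn := integral_nonneg fun _ => le_max_left _ _
  unfold LD
  have := mul_nonneg hγ.1 hPg
  have := mul_nonneg (sub_nonneg.2 hγ.2) hPn
  linarith

lemma bddBelow_LDValues (Pp Pn Pg : Measure X) {a γ : ℝ} (hγ : γ ∈ Icc (0 : ℝ) 1) :
    BddBelow (LDValues Pp Pn a γ Pg) :=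
  ⟨0, fun _ ⟨_, _, hD, hv⟩ => hv ▸ LD_nonneg Pp Pn Pg hγ fun x => (hD x).1⟩

lemma mul_le_LD_self (Pp Pn : Measure X) [IsProbabilityMeasure Pp] {a γ : ℝ}
    (hγ : γ ∈ Icc (0 : ℝ) 1) {D : X → ℝ} (hD : Measurable D) (hDa : ∀ x, D x ∈ Icc 0 a) :
    a * γ ≤ LD Pp Pn a γ D Pp := by
  have hM : ∀ x, max 0 (a - D x) ∈ Icc 0 a := fun x =>
    ⟨le_max_left _ _, max_le ((hDa x).1.trans (hDa x).2) (by linarith [(hDa x).1])⟩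
  have hMint : Integrable (fun x => max 0 (a - D x)) Pp :=
    integrable_of_mem_Icc Pp (measurable_const.max (measurable_const.sub hD)) hM
  have hpoint : ∀ x, a * γ ≤ D x + γ * max 0 (a - D x) := fun x => by
    rw [max_eq_right (sub_nonneg.2 (hDa x).2)]
    nlinarith [(hDa x).1, hγ.2]
  have hPp : a * γ ≤ (∫ x, D x ∂Pp) + γ * ∫ x, max 0 (a - D x) ∂Pp := by
    rw [← integral_const_mul, ← integral_add (integrable_of_mem_Icc Pp hD hDa)
      (hMint.const_mul γ)]
    simpa using integral_mono (integrable_const (a * γ))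
      ((integrable_of_mem_Icc Pp hD hDa).add (hMint.const_mul γ)) hpoint
  have hPn : 0 ≤ (1 - γ) * ∫ x, max 0 (a - D x) ∂Pn :=
    mul_nonneg (sub_nonneg.2 hγ.2) (integral_nonneg fun _ => le_max_left _ _)
  unfold LD
  linarith

lemma LD_indicator_compl (Pp Pn Pg : Measure X) {S : Set X} (hS : MeasurableSet S)
    (hSp : Pp Sᶜ = 0) (hSn : Pn S = 0) {a : ℝ} (ha : 0 ≤ a) (γ : ℝ) :
    LD Pp Pn a γ (Sᶜ.indicator fun _ => a) Pg = γ * (Pg.real S * a) := by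
  have hM : (fun x => max 0 (a - Sᶜ.indicator (fun _ => a) x)) = S.indicator fun _ => a := by
    ext x
    by_cases hx : x ∈ S <;> simp [hx, ha]
  simp only [LD, hM, integral_indicator_const _ hS, integral_indicator_const _ hS.compl,
    measureReal_def, hSp, hSn, smul_eq_mul]
  simp

lemma indicator_compl_mem_LDValues (Pp Pn Pg : Measure X) {S : Set X} (hS : MeasurableSet S)
    {a : ℝ} (ha : 0 ≤ a) (γ : ℝ) :
    LD Pp Pn a γ (Sᶜ.indicator fun _ => a) Pg ∈ LDValues Pp Pn a γ Pg := by
  refine ⟨_, measurable_const.indicator hS.compl, fun x => ?_, rfl⟩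
  by_cases hx : x ∈ Sᶜ <;> simp [hx, ha]

variable (Pp Pn : Measure X) {S : Set X} (hS : MeasurableSet S)
  (hSp : Pp Sᶜ = 0) (hSn : Pn S = 0) {a γ : ℝ} (ha : 0 ≤ a) (hγ : γ ∈ Icc (0 : ℝ) 1)
include hS hSp hSn ha hγ

lemma sInf_LDValues_self [IsProbabilityMeasure Pp] : sInf (LDValues Pp Pn a γ Pp) = a * γ := by
  have hmem := indicator_compl_mem_LDValues Pp Pn Pp hS ha γ
  rw [LD_indicator_compl Pp Pn Pp hS hSp hSn ha, measureReal_def,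
    (prob_compl_eq_zero_iff hS).1 hSp, ENNReal.toReal_one, one_mul, mul_comm] at hmem
  exact le_antisymm (csInf_le (bddBelow_LDValues Pp Pn Pp hγ) hmem)
    (le_csInf ⟨_, hmem⟩ fun _ ⟨_, hD, hDa, hv⟩ => hv ▸ mul_le_LD_self Pp Pn hγ hD hDa)

lemma sInf_LDValues_le (Pg : Measure X) [IsProbabilityMeasure Pg] :
    sInf (LDValues Pp Pn a γ Pg) ≤ a * γ :=
  calc sInf (LDValues Pp Pn a γ Pg)
      ≤ LD Pp Pn a γ (Sᶜ.indicator fun _ => a) Pg :=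
        csInf_le (bddBelow_LDValues Pp Pn Pg hγ) (indicator_compl_mem_LDValues Pp Pn Pg hS ha γ)
    _ = γ * (Pg.real S * a) := LD_indicator_compl Pp Pn Pg hS hSp hSn ha γ
    _ ≤ γ * (1 * a) := by gcongr; exacts [hγ.1, measureReal_le_one]
    _ = a * γ := by ring

end

theorem stmt15_general {X : Type*} [MeasurableSpace X] (Pp Pn : Measure X)
    [IsProbabilityMeasure Pp]
    (S : Set X) (hS : MeasurableSet S) (hSp : Pp S = 1) (hSn : Pn S = 0)
    (a γ : ℝ) (ha : 0 < a) (hγ : γ ∈ Set.Ioc (0 : ℝ) 1) :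
    sInf {v : ℝ | ∃ D : X → ℝ, Measurable D ∧ (∀ x, D x ∈ Set.Icc 0 a) ∧
        v = LD Pp Pn a γ D Pp} = a - (a / 2) * (2 * (1 - γ)) ∧
    a - (a / 2) * (2 * (1 - γ)) = a * γ ∧
    IsLeast {v : ℝ | ∃ (Pg : Measure X) (_ : IsProbabilityMeasure Pg),
        v = a - sInf {w : ℝ | ∃ D : X → ℝ, Measurable D ∧ (∀ x, D x ∈ Set.Icc 0 a) ∧
          w = LD Pp Pn a γ D Pg}}
      (a - sInf {v : ℝ | ∃ D : X → ℝ, Measurable D ∧ (∀ x, D x ∈ Set.Icc 0 a) ∧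
        v = LD Pp Pn a γ D Pp}) := by
  have hSp' : Pp Sᶜ = 0 := (prob_compl_eq_zero_iff hS).2 hSp
  have hγ' : γ ∈ Icc (0 : ℝ) 1 := Ioc_subset_Icc_self hγ
  have hself : sInf (LDValues Pp Pn a γ Pp) = a * γ :=
    sInf_LDValues_self Pp Pn hS hSp' hSn ha.le hγ'
  have hring : a - (a / 2) * (2 * (1 - γ)) = a * γ := by ring
  refine ⟨hself.trans hring.symm, hring, ⟨Pp, inferInstance, rfl⟩, ?_⟩
  rintro _ ⟨Pg, _, rfl⟩
  have hle : sInf (LDValues Pp Pn a γ Pg) ≤ a * γ :=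
    sInf_LDValues_le Pp Pn hS hSp' hSn ha.le hγ' Pg
  change a - sInf (LDValues Pp Pn a γ Pp) ≤ a - sInf (LDValues Pp Pn a γ Pg)
  linarith

/-- Nash equilibrium of the image-level game: at `P_g* = P⁺` the optimal discriminator
value is `inf_D L_D(D, P⁺) = a - (a/2)·2(1-γ) = aγ`, and the corresponding generator
value `a - inf_D L_D(D, P⁺)` is the least value of `P_g ↦ a - inf_D L_D(D, P_g)`
(i.e. of `P_g ↦ L_G(D*(P_g), P_g)`) over all probability measures `P_g`. -/
theorem stmt15 {X : Type*} [MeasurableSpace X] (Pp Pn : Measure X)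
    [IsProbabilityMeasure Pp] [IsProbabilityMeasure Pn]
    (S : Set X) (hS : MeasurableSet S) (hSp : Pp S = 1) (hSn : Pn S = 0)
    (a γ : ℝ) (ha : 0 < a) (hγ : γ ∈ Set.Ioc (0 : ℝ) 1) :
    sInf {v : ℝ | ∃ D : X → ℝ, Measurable D ∧ (∀ x, D x ∈ Set.Icc 0 a) ∧
        v = LD Pp Pn a γ D Pp} = a - (a / 2) * (2 * (1 - γ)) ∧
    a - (a / 2) * (2 * (1 - γ)) = a * γ ∧
    IsLeast {v : ℝ | ∃ (Pg : Measure X) (_ : IsProbabilityMeasure Pg),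
        v = a - sInf {w : ℝ | ∃ D : X → ℝ, Measurable D ∧ (∀ x, D x ∈ Set.Icc 0 a) ∧
          w = LD Pp Pn a γ D Pg}}
      (a - sInf {v : ℝ | ∃ D : X → ℝ, Measurable D ∧ (∀ x, D x ∈ Set.Icc 0 a) ∧
        v = LD Pp Pn a γ D Pp}) :=
  stmt15_general Pp Pn S hS hSp hSn a γ ha hγ
end
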